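/- For ℓ > 0 and z > 0 define g_ℓ(z) := (1/π) ∫₀^∞ e^{−ℓθ − z·sinh θ} dθ, and let T denote the Euler operator (T f)(z) := z·f′(z). Then for every integer j ≥ 0 there exists a constant C_j such that |(T^j g_ℓ)(z)| ≤ C_j / ℓ for all ℓ ≥ 1 and all z > 0. -/

import Mathlib

open MeasureTheory

/-- The non-oscillatory part of the Bessel function:
`g_ℓ(z) = (1/π) ∫₀^∞ exp(−ℓθ − z sinh θ) dθ`. -/
noncomputable def gBessel (ℓ : ℝ) (z : ℝ) : ℝ :=
  (1 / Real.pi) * ∫ θ in Set.Ioi (0 : ℝ), Real.exp (-ℓ * θ - z * Real.sinh θ)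

/-- The Euler operator `(T f)(z) = z · f′(z)`. -/
noncomputable def eulerOp (f : ℝ → ℝ) : ℝ → ℝ := fun z => z * deriv f z

/-!
Differentiating under the integral sign, `T^j g_ℓ(z) = (1/π) ∫₀^∞ P_j(z sinh θ) e^{−ℓθ − z sinh θ} dθ`
with `P_0 = 1` and `P_{j+1}(u) = u (P_j′(u) − P_j(u))`. Since `|P(u)| e^{−u}` is bounded on `[0, ∞)`
for every polynomial `P`, the integrand is at most a constant times `e^{−ℓθ}`, whose integral is `1/ℓ`.
-/

open Set Polynomial Real
open scoped Nat

theorem Real.pow_mul_exp_neg_le_factorial {u : ℝ} (hu : 0 ≤ u) (n : ℕ) :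
    u ^ n * exp (-u) ≤ n ! := by
  have h := Real.pow_div_factorial_le_exp u hu n
  rw [div_le_iff₀ (by positivity)] at h
  rw [exp_neg, ← div_eq_mul_inv, div_le_iff₀ (exp_pos u), mul_comm]
  exact h

theorem Polynomial.abs_eval_mul_exp_neg_le (p : ℝ[X]) {u : ℝ} (hu : 0 ≤ u) :
    |p.eval u| * exp (-u) ≤ ∑ i ∈ Finset.range (p.natDegree + 1), |p.coeff i| * i ! := by
  rw [eval_eq_sum_range]
  calc |∑ i ∈ Finset.range (p.natDegree + 1), p.coeff i * u ^ i| * exp (-u)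
      ≤ (∑ i ∈ Finset.range (p.natDegree + 1), |p.coeff i| * u ^ i) * exp (-u) := by
        gcongr
        refine (Finset.abs_sum_le_sum_abs _ _).trans_eq ?_
        simp only [abs_mul, abs_pow, abs_of_nonneg hu]
    _ = ∑ i ∈ Finset.range (p.natDegree + 1), |p.coeff i| * (u ^ i * exp (-u)) := by
        rw [Finset.sum_mul]
        simp only [mul_assoc]
    _ ≤ ∑ i ∈ Finset.range (p.natDegree + 1), |p.coeff i| * i ! := by
        gcongr with i
        exact pow_mul_exp_neg_le_factorial hu i

theorem Set.EqOn.eulerOp {f g : ℝ → ℝ} {s : Set ℝ} (h : EqOn f g s) (hs : IsOpen s) :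
    EqOn (eulerOp f) (eulerOp g) s := fun z hz => by
  simp only [_root_.eulerOp, (h.eventuallyEq_of_mem (hs.mem_nhds hz)).deriv_eq]

/-- The polynomial `u (P′(u) − P(u))`: applying `T` to `z ↦ P(z sinh θ) e^{−z sinh θ}` multiplies
it by this polynomial evaluated at `z sinh θ`. -/
noncomputable def eulerPoly (p : ℝ[X]) : ℝ[X] := X * (derivative p - p)

section

variable (ℓ : ℝ)

noncomputable def besselIntegrand (p : ℝ[X]) (z θ : ℝ) : ℝ :=
  p.eval (z * sinh θ) * exp (-ℓ * θ - z * sinh θ)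

noncomputable def gBesselWeighted (p : ℝ[X]) (z : ℝ) : ℝ :=
  1 / π * ∫ θ in Ioi 0, besselIntegrand ℓ p z θ

theorem gBesselWeighted_one : gBesselWeighted ℓ 1 = gBessel ℓ := by
  ext z
  simp [gBesselWeighted, besselIntegrand, gBessel]

theorem continuous_besselIntegrand (p : ℝ[X]) (z : ℝ) : Continuous (besselIntegrand ℓ p z) := by
  unfold besselIntegrand
  fun_prop

theorem abs_besselIntegrand_le {p : ℝ[X]} {M : ℝ}
    (hM : ∀ u, 0 ≤ u → |p.eval u| * exp (-u) ≤ M) {z θ : ℝ} (hz : 0 ≤ z) (hθ : 0 ≤ θ) :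
    |besselIntegrand ℓ p z θ| ≤ M * exp (-ℓ * θ) := by
  have hu : 0 ≤ z * sinh θ := mul_nonneg hz (sinh_nonneg_iff.mpr hθ)
  have hsplit : besselIntegrand ℓ p z θ
      = p.eval (z * sinh θ) * exp (-(z * sinh θ)) * exp (-ℓ * θ) := by
    simp only [besselIntegrand, sub_eq_add_neg, exp_add]
    ring
  rw [hsplit, abs_mul, abs_mul, abs_exp, abs_exp]
  exact mul_le_mul_of_nonneg_right (hM _ hu) (exp_pos _).le

theorem hasDerivAt_besselIntegrand (p : ℝ[X]) (θ : ℝ) {x : ℝ} (hx : x ≠ 0) :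
    HasDerivAt (fun x => besselIntegrand ℓ p x θ) (x⁻¹ * besselIntegrand ℓ (eulerPoly p) x θ) x := by
  have hlin : HasDerivAt (fun x => x * sinh θ) (sinh θ) x := by
    simpa using (hasDerivAt_id x).mul_const (sinh θ)
  have hD := ((p.hasDerivAt _).comp x hlin).mul ((hlin.const_sub (-ℓ * θ)).exp)
  refine hD.congr_deriv ?_
  simp only [besselIntegrand, eulerPoly, eval_mul, eval_X, eval_sub, Function.comp_apply]
  field_simp
  ring

variable {ℓ} (hℓ : 0 < ℓ)
include hℓ

theorem integrableOn_besselIntegrand (p : ℝ[X]) {z : ℝ} (hz : 0 ≤ z) :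
    IntegrableOn (besselIntegrand ℓ p z) (Ioi 0) :=
  ((exp_neg_integrableOn_Ioi 0 hℓ).const_mul _).mono'
    (continuous_besselIntegrand ℓ p z).aestronglyMeasurable
    (ae_restrict_of_forall_mem measurableSet_Ioi fun _ hθ =>
      abs_besselIntegrand_le ℓ (fun _ hu => p.abs_eval_mul_exp_neg_le hu) hz (le_of_lt hθ))

theorem abs_integral_besselIntegrand_le {p : ℝ[X]} {M : ℝ}
    (hM : ∀ u, 0 ≤ u → |p.eval u| * exp (-u) ≤ M) {z : ℝ} (hz : 0 ≤ z) :
    |∫ θ in Ioi 0, besselIntegrand ℓ p z θ| ≤ M / ℓ := by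
  have hint : ∫ θ in Ioi (0 : ℝ), M * exp (-ℓ * θ) = M / ℓ := by
    rw [integral_const_mul, integral_exp_mul_Ioi (neg_lt_zero.mpr hℓ)]
    field_simp
    simp
  rw [← hint]
  exact norm_integral_le_of_norm_le ((exp_neg_integrableOn_Ioi 0 hℓ).const_mul _)
    (ae_restrict_of_forall_mem measurableSet_Ioi fun _ hθ =>
      (Real.norm_eq_abs _).trans_le (abs_besselIntegrand_le ℓ hM hz (le_of_lt hθ)))

theorem hasDerivAt_integral_besselIntegrand (p : ℝ[X]) {z : ℝ} (hz : 0 < z) :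
    HasDerivAt (fun x => ∫ θ in Ioi 0, besselIntegrand ℓ p x θ)
      (z⁻¹ * ∫ θ in Ioi 0, besselIntegrand ℓ (eulerPoly p) z θ) z := by
  set q := eulerPoly p
  obtain ⟨M, hM⟩ : ∃ M, ∀ u, 0 ≤ u → |q.eval u| * exp (-u) ≤ M :=
    ⟨_, fun _ hu => q.abs_eval_mul_exp_neg_le hu⟩
  have hz2 : 0 < z / 2 := half_pos hz
  rw [← integral_const_mul]
  refine (hasDerivAt_integral_of_dominated_loc_of_deriv_le
    (F' := fun x θ => x⁻¹ * besselIntegrand ℓ q x θ) (Ioi_mem_nhds (half_lt_self hz))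
    (.of_forall fun x => (continuous_besselIntegrand ℓ p x).aestronglyMeasurable)
    (integrableOn_besselIntegrand hℓ p hz.le)
    ((continuous_besselIntegrand ℓ q z).const_mul _).aestronglyMeasurable ?_
    ((exp_neg_integrableOn_Ioi 0 hℓ).const_mul (2 / z * M))
    (.of_forall fun θ x hx => hasDerivAt_besselIntegrand ℓ p θ (hz2.trans hx).ne')).2
  refine ae_restrict_of_forall_mem measurableSet_Ioi fun θ hθ x hx => ?_
  have hx0 : 0 < x := hz2.trans hx
  have hinv : x⁻¹ ≤ 2 / z := by
    rw [← inv_div]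
    exact (inv_lt_inv₀ hx0 hz2).2 hx |>.le
  rw [norm_mul, norm_inv, Real.norm_eq_abs, Real.norm_eq_abs, abs_of_pos hx0, mul_assoc]
  exact mul_le_mul hinv (abs_besselIntegrand_le ℓ hM hx0.le (le_of_lt hθ)) (abs_nonneg _)
    (by positivity)

theorem eulerOp_gBesselWeighted (p : ℝ[X]) :
    EqOn (eulerOp (gBesselWeighted ℓ p)) (gBesselWeighted ℓ (eulerPoly p)) (Ioi 0) :=
  fun z (hz : 0 < z) => by
    have hD : HasDerivAt (gBesselWeighted ℓ p)
        (1 / π * (z⁻¹ * ∫ θ in Ioi 0, besselIntegrand ℓ (eulerPoly p) z θ)) z :=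
      (hasDerivAt_integral_besselIntegrand hℓ p hz).const_mul _
    rw [eulerOp, hD.deriv, gBesselWeighted]
    field_simp

theorem eulerOp_iterate_gBesselWeighted (p : ℝ[X]) (j : ℕ) :
    EqOn (eulerOp^[j] (gBesselWeighted ℓ p)) (gBesselWeighted ℓ (eulerPoly^[j] p)) (Ioi 0) := by
  induction j with
  | zero => exact eqOn_refl _ _
  | succ j ih =>
    simp only [Function.iterate_succ_apply']
    exact (ih.eulerOp isOpen_Ioi).trans (eulerOp_gBesselWeighted hℓ _)

theorem abs_gBesselWeighted_le {p : ℝ[X]} {M : ℝ}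
    (hM : ∀ u, 0 ≤ u → |p.eval u| * exp (-u) ≤ M) {z : ℝ} (hz : 0 ≤ z) :
    |gBesselWeighted ℓ p z| ≤ M / π / ℓ := by
  rw [gBesselWeighted, abs_mul, abs_of_pos (by positivity)]
  calc 1 / π * |∫ θ in Ioi 0, besselIntegrand ℓ p z θ| ≤ 1 / π * (M / ℓ) := by
        gcongr
        exact abs_integral_besselIntegrand_le hℓ hM hz
    _ = M / π / ℓ := by ring

end

theorem euler_iterates_bessel_tail_bound :
    ∀ j : ℕ, ∃ C : ℝ, ∀ ℓ : ℝ, 1 ≤ ℓ → ∀ z : ℝ, 0 < z →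
      |(eulerOp^[j] (gBessel ℓ)) z| ≤ C / ℓ := by
  intro j
  set p := eulerPoly^[j] 1
  refine ⟨(∑ i ∈ Finset.range (p.natDegree + 1), |p.coeff i| * i !) / π, fun ℓ hℓ z hz => ?_⟩
  have hℓ0 : 0 < ℓ := one_pos.trans_le hℓ
  rw [← gBesselWeighted_one, eulerOp_iterate_gBesselWeighted hℓ0 1 j hz]
  exact abs_gBesselWeighted_le hℓ0 (fun _ hu => p.abs_eval_mul_exp_neg_le hu) hz.le
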